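/- The edge set of the complete graph K_{10} can be partitioned into 3 subgraphs, each planar and of girth at least 4 (triangle-free). -/

import Mathlib

open SimpleGraph Set

/-- A simple graph is planar if it admits a drawing in the plane: an injective placement of
vertices together with, for each edge, a simple (injective continuous) arc joining its endpoints,
such that arcs pass through no other vertices and two distinct arcs meet only in common
endpoints. -/
def IsPlanar {V : Type*} (G : SimpleGraph V) : Prop :=
  ∃ (pos : V → ℝ × ℝ) (arc : V → V → Set (ℝ × ℝ)),
    Function.Injective pos ∧
    (∀ u v, G.Adj u v →
      ∃ f : ℝ → ℝ × ℝ, ContinuousOn f (Set.Icc 0 1) ∧ Set.InjOn f (Set.Icc 0 1) ∧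
        f 0 = pos u ∧ f 1 = pos v ∧ arc u v = f '' Set.Icc 0 1) ∧
    (∀ u v, arc u v = arc v u) ∧
    (∀ u v, G.Adj u v → ∀ w, pos w ∈ arc u v → w = u ∨ w = v) ∧
    (∀ u v u' v', G.Adj u v → G.Adj u' v' → s(u, v) ≠ s(u', v') →
      arc u v ∩ arc u' v' ⊆ ({pos u, pos v} : Set (ℝ × ℝ)) ∩ {pos u', pos v'})

/-!
Colour the edges of `K₁₀` with three colours and draw each colour class with straight segments
between integer points. Such a drawing is planar as soon as no vertex lies on the line through an
edge not incident to it and, for any two vertex-disjoint edges, the endpoints of one lie strictly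
on one side of the line through the other. These are sign conditions on integer cross products,
so they can be checked by `decide`, as can triangle-freeness of each class.
-/

section Cross

variable {R : Type*} [CommRing R]

/-- Twice the signed area of the triangle `a b c`: positive iff `c` lies to the left of the
directed line from `a` to `b`. -/
def cross (a b c : R × R) : R := (b.1 - a.1) * (c.2 - a.2) - (b.2 - a.2) * (c.1 - a.1)

@[simp] lemma cross_self_left (a b : R × R) : cross a b a = 0 := by simp [cross]

@[simp] lemma cross_self_right (a b : R × R) : cross a b b = 0 := by unfold cross; ring

lemma cross_add_smul (p q a b : R × R) {s t : R} (hst : s + t = 1) :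
    cross p q (s • a + t • b) = s * cross p q a + t * cross p q b := by
  simp only [cross, Prod.fst_add, Prod.snd_add, Prod.smul_fst, Prod.smul_snd, smul_eq_mul]
  linear_combination ((q.1 - p.1) * p.2 - (q.2 - p.2) * p.1) * hst

lemma map_cross {S : Type*} [CommRing S] (f : R →+* S) (a b c : R × R) :
    cross (Prod.map f f a) (Prod.map f f b) (Prod.map f f c) = f (cross a b c) := by
  simp [cross]

lemma cross_eq_zero_of_mem_segment [PartialOrder R] {a b x : R × R} (hx : x ∈ segment R a b) :
    cross a b x = 0 := by
  obtain ⟨s, t, -, -, hst, rfl⟩ := hx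
  simp [cross_add_smul a b a b hst]

end Cross

section Segment

variable {𝕜 : Type*} [Field 𝕜] [LinearOrder 𝕜] [IsStrictOrderedRing 𝕜] {a b c d x : 𝕜 × 𝕜}

lemma disjoint_segment_of_cross_mul_pos (h : 0 < cross a b c * cross a b d) :
    Disjoint (segment 𝕜 a b) (segment 𝕜 c d) := by
  refine Set.disjoint_left.mpr fun x hab hcd => ?_
  obtain ⟨s, t, hs, ht, hst, rfl⟩ := hcd
  have h0 := cross_eq_zero_of_mem_segment hab
  rw [cross_add_smul a b c d hst] at h0
  have hc : cross a b c ≠ 0 := left_ne_zero_of_mul h.ne'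
  have hsum : s * cross a b c ^ 2 + t * (cross a b c * cross a b d) = 0 := by
    linear_combination cross a b c * h0
  have hs0 : s * cross a b c ^ 2 = 0 := by
    nlinarith [mul_nonneg hs (sq_nonneg (cross a b c)), mul_nonneg ht h.le]
  have ht0 : t * (cross a b c * cross a b d) = 0 := by linarith
  obtain rfl : s = 0 := by simpa [hc] using hs0
  obtain rfl : t = 0 := (mul_eq_zero.mp ht0).resolve_right h.ne'
  simp at hst

lemma segment_inter_segment_subset_of_cross_ne_zero (h : cross a b d ≠ 0) :
    segment 𝕜 a b ∩ segment 𝕜 a d ⊆ {a} := by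
  rintro x ⟨hab, s, t, -, -, hst, rfl⟩
  have h0 := cross_eq_zero_of_mem_segment hab
  rw [cross_add_smul a b a d hst, cross_self_left, mul_zero, zero_add] at h0
  obtain rfl : t = 0 := (mul_eq_zero.mp h0).resolve_right h
  obtain rfl : s = 1 := by linarith
  simp

end Segment

theorem isPlanar_of_cross {V : Type*} (G : SimpleGraph V) (p : V → ℝ × ℝ)
    (hp : Function.Injective p)
    (h_off : ∀ u v w, G.Adj u v → w ≠ u → w ≠ v → cross (p u) (p v) (p w) ≠ 0)
    (h_sep : ∀ a b c d, G.Adj a b → G.Adj c d → a ≠ c → a ≠ d → b ≠ c → b ≠ d →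
      0 < cross (p a) (p b) (p c) * cross (p a) (p b) (p d) ∨
        0 < cross (p c) (p d) (p a) * cross (p c) (p d) (p b)) :
    IsPlanar G := by
  have shared {u v w x} (huv : G.Adj u v) (huw : G.Adj u w) (hvw : v ≠ w)
      (hv : x ∈ segment ℝ (p u) (p v)) (hw : x ∈ segment ℝ (p u) (p w)) : x = p u :=
    segment_inter_segment_subset_of_cross_ne_zero (h_off u v w huv huw.ne' hvw.symm) ⟨hv, hw⟩
  have endpoint {u v u' v' x} (h : G.Adj u v) (h' : G.Adj u' v') (hne : s(u, v) ≠ s(u', v'))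
      (hx : x ∈ segment ℝ (p u) (p v)) (hx' : x ∈ segment ℝ (p u') (p v')) :
      x = p u ∨ x = p v := by
    obtain rfl | hu := eq_or_ne u u'
    · exact .inl (shared h h' (fun hv => hne (by rw [hv])) hx hx')
    obtain rfl | hu' := eq_or_ne u v'
    · exact .inl (shared h h'.symm (fun hv => hne (by rw [hv, Sym2.eq_swap])) hx
        (segment_symm ℝ (p u') _ ▸ hx'))
    obtain rfl | hv := eq_or_ne v u'
    · exact .inr (shared h.symm h' (fun hu => hne (by rw [hu, Sym2.eq_swap]))
        (segment_symm ℝ (p u) _ ▸ hx) hx')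
    obtain rfl | hv' := eq_or_ne v v'
    · exact .inr (shared h.symm h'.symm (fun hu => hne (by rw [hu]))
        (segment_symm ℝ (p u) _ ▸ hx) (segment_symm ℝ (p u') _ ▸ hx'))
    rcases h_sep u v u' v' h h' hu hu' hv hv' with hsep | hsep
    · exact (Set.disjoint_left.mp (disjoint_segment_of_cross_mul_pos hsep) hx hx').elim
    · exact (Set.disjoint_left.mp (disjoint_segment_of_cross_mul_pos hsep) hx' hx).elim
  refine ⟨p, fun u v => segment ℝ (p u) (p v), hp, fun u v h => ?_,
    fun u v => segment_symm ℝ _ _, fun u v h w hw => ?_, fun u v u' v' h h' hne x hx =>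
    ⟨endpoint h h' hne hx.1 hx.2, endpoint h' h hne.symm hx.2 hx.1⟩⟩
  · exact ⟨AffineMap.lineMap (p u) (p v), AffineMap.lineMap_continuous.continuousOn,
      (AffineMap.lineMap_injective ℝ (hp.ne h.ne)).injOn, AffineMap.lineMap_apply_zero _ _,
      AffineMap.lineMap_apply_one _ _, segment_eq_image_lineMap ℝ _ _⟩
  · by_contra! hne
    exact h_off u v w h hne.1 hne.2 (cross_eq_zero_of_mem_segment hw)

theorem isPlanar_of_int_cross {V : Type*} (G : SimpleGraph V) (q : V → ℤ × ℤ)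
    (hq : Function.Injective q)
    (h_off : ∀ u v w, G.Adj u v → w ≠ u → w ≠ v → cross (q u) (q v) (q w) ≠ 0)
    (h_sep : ∀ a b c d, G.Adj a b → G.Adj c d → a ≠ c → a ≠ d → b ≠ c → b ≠ d →
      0 < cross (q a) (q b) (q c) * cross (q a) (q b) (q d) ∨
        0 < cross (q c) (q d) (q a) * cross (q c) (q d) (q b)) :
    IsPlanar G := by
  let cast : ℤ × ℤ → ℝ × ℝ := Prod.map (Int.castRingHom ℝ) (Int.castRingHom ℝ)
  have hcross u v w : cross (cast (q u)) (cast (q v)) (cast (q w)) = cross (q u) (q v) (q w) :=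
    map_cross (Int.castRingHom ℝ) _ _ _
  refine isPlanar_of_cross G (cast ∘ q) ((Prod.map_injective.mpr
    ⟨Int.cast_injective, Int.cast_injective⟩).comp hq) (fun u v w h hu hv => ?_)
    (fun a b c d hab hcd h1 h2 h3 h4 => ?_)
  · simpa only [Function.comp_apply, hcross, Int.cast_ne_zero] using h_off u v w h hu hv
  · simpa only [Function.comp_apply, hcross, ← Int.cast_mul, Int.cast_pos] using
      h_sep a b c d hab hcd h1 h2 h3 h4

namespace SimpleGraph

variable {V : Type*} {G : SimpleGraph V}

lemma cliqueFree_three_iff : G.CliqueFree 3 ↔ ∀ a b c, G.Adj a b → G.Adj a c → ¬ G.Adj b c := by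
  classical
  refine ⟨fun h a b c hab hac hbc => h {a, b, c} (is3Clique_triple_iff.mpr ⟨hab, hac, hbc⟩),
    fun h s hs => ?_⟩
  obtain ⟨a, b, c, hab, hac, hbc, rfl⟩ := is3Clique_iff.mp hs
  exact h a b c hab hac hbc

lemma four_le_egirth_of_cliqueFree (h : G.CliqueFree 3) : 4 ≤ G.egirth := by
  refine le_egirth.mpr fun a w hw => ?_
  have h3 : w.length ≠ 3 := fun h3 => by
    obtain ⟨s, hs⟩ := is3Clique_iff_exists_cycle_length_three.mpr ⟨a, w, hw, h3⟩
    exact h s hs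
  have := hw.three_le_length
  exact_mod_cast (by omega : 4 ≤ w.length)

variable {ι : Type*} (c : Sym2 V → ι)

lemma iSup_fromEdgeSet_preimage_singleton : ⨆ i, fromEdgeSet (c ⁻¹' {i}) = ⊤ := by
  ext u v
  simp

lemma disjoint_edgeSet_fromEdgeSet_preimage_singleton {i j : ι} (hij : i ≠ j) :
    Disjoint (fromEdgeSet (c ⁻¹' {i})).edgeSet (fromEdgeSet (c ⁻¹' {j})).edgeSet := by
  rw [edgeSet_fromEdgeSet, edgeSet_fromEdgeSet]
  exact ((Set.disjoint_singleton.mpr hij).preimage c).mono Set.sdiff_subset Set.sdiff_subset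

end SimpleGraph

instance Set.decidableMemPreimage {α β : Type*} {f : α → β} {s : Set β}
    [DecidablePred (· ∈ s)] : DecidablePred (· ∈ f ⁻¹' s) :=
  fun a => inferInstanceAs (Decidable (f a ∈ s))

-- Entry `(u, v)` is the colour of the edge `uv`; the diagonal is never read.
def k10Coloring : Sym2 (Fin 10) → Fin 3 :=
  Sym2.lift ⟨fun u v => ![![0, 1, 2, 2, 1, 0, 0, 0, 0, 0],
                          ![1, 0, 1, 2, 2, 0, 0, 0, 0, 0],
                          ![2, 1, 0, 1, 2, 0, 0, 1, 2, 1],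
                          ![2, 2, 1, 0, 1, 1, 0, 0, 2, 2],
                          ![1, 2, 2, 1, 0, 2, 1, 0, 0, 2],
                          ![0, 0, 0, 1, 2, 0, 1, 2, 2, 1],
                          ![0, 0, 0, 0, 1, 1, 0, 1, 2, 2],
                          ![0, 0, 1, 0, 0, 2, 1, 0, 1, 2],
                          ![0, 0, 2, 2, 0, 2, 2, 1, 0, 1],
                          ![0, 0, 1, 2, 2, 1, 2, 2, 1, 0]] u v, by decide⟩

def k10Drawing : Fin 3 → Fin 10 → ℤ × ℤ :=
  ![![(0, 8), (1, -8), (-2, 2), (0, 1), (2, 1), (-6, 2), (-2, -1), (2, -2), (4, -1), (6, -2)],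
    ![(-2, 4), (-3, 1), (-4, -4), (2, -4), (3, 1), (2, -3), (0, 2), (-3, -1), (0, 1), (1, -3)],
    ![(2, 4), (0, -3), (-4, 3), (5, -5), (-2, -5), (-1, 0), (2, 0), (1, 1), (1, 3), (-1, -1)]]

/-- The edge set of `K₁₀` can be partitioned into 3 subgraphs, each planar with girth at least
four. -/
theorem decomposition_K10 :
    ∃ f : Fin 3 → SimpleGraph (Fin 10),
      (∀ i, IsPlanar (f i) ∧ 4 ≤ (f i).egirth) ∧
      (∀ i j, i ≠ j → Disjoint (f i).edgeSet (f j).edgeSet) ∧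
      (⨆ i, f i) = ⊤ := by
  refine ⟨fun i => fromEdgeSet (k10Coloring ⁻¹' {i}), fun i => ⟨?_, ?_⟩,
    fun i j => disjoint_edgeSet_fromEdgeSet_preimage_singleton k10Coloring,
    iSup_fromEdgeSet_preimage_singleton k10Coloring⟩
  · refine isPlanar_of_int_cross _ (k10Drawing i) ?_ ?_ ?_ <;> revert i <;> decide
  · exact four_le_egirth_of_cliqueFree (cliqueFree_three_iff.mpr (by revert i; decide))
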